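/- Let R_Fano = (1/2)·circulant(−1, 1, 1, 0, 1, 0, 0) be the 7×7 regular orthogonal matrix and P the cyclic permutation matrix sending coordinate i to i+1 (mod 7). Then a 0/1 vector v ∈ {0,1}⁷ satisfies that R_Fanoᵀ v is again a 0/1 vector if and only if v is the zero vector, the all-ones vector, or v = Pⁱ(1,1,0,1,0,0,0)ᵀ or v = Pⁱ(0,0,1,0,1,1,1)ᵀ for some i ∈ {0,…,6}. Moreover, if v = Pⁱ(1,1,0,1,0,0,0)ᵀ then R_Fanoᵀ v = Pⁱ(0,0,1,0,1,1,0)ᵀ, and if v = Pⁱ(0,0,1,0,1,1,1)ᵀ then R_Fanoᵀ v = Pⁱ(1,1,0,1,0,0,1)ᵀ. -/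
import Mathlib


open Matrix

/-- The `7×7` regular orthogonal matrix `R_Fano = (1/2)·circulant(−1,1,1,0,1,0,0)`. -/
noncomputable def RFano : Matrix (Fin 7) (Fin 7) ℝ :=
  Matrix.of fun i j => (1/2 : ℝ) * ![(-1 : ℝ), 1, 1, 0, 1, 0, 0] (j - i)

/-- Cyclic shift of a vector on `Fin 7` by `i` positions (the effect of `Pⁱ`). -/
noncomputable def shift7 (i : Fin 7) (x : Fin 7 → ℝ) : Fin 7 → ℝ := fun j => x (j - i)

lemma s00 : ((0:Fin 7) - (0:Fin 7)) = 0 := rfl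
lemma s01 : ((0:Fin 7) - (1:Fin 7)) = 6 := rfl
lemma s02 : ((0:Fin 7) - (2:Fin 7)) = 5 := rfl
lemma s03 : ((0:Fin 7) - (3:Fin 7)) = 4 := rfl
lemma s04 : ((0:Fin 7) - (4:Fin 7)) = 3 := rfl
lemma s05 : ((0:Fin 7) - (5:Fin 7)) = 2 := rfl
lemma s06 : ((0:Fin 7) - (6:Fin 7)) = 1 := rfl
lemma s10 : ((1:Fin 7) - (0:Fin 7)) = 1 := rfl
lemma s11 : ((1:Fin 7) - (1:Fin 7)) = 0 := rfl
lemma s12 : ((1:Fin 7) - (2:Fin 7)) = 6 := rfl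
lemma s13 : ((1:Fin 7) - (3:Fin 7)) = 5 := rfl
lemma s14 : ((1:Fin 7) - (4:Fin 7)) = 4 := rfl
lemma s15 : ((1:Fin 7) - (5:Fin 7)) = 3 := rfl
lemma s16 : ((1:Fin 7) - (6:Fin 7)) = 2 := rfl
lemma s20 : ((2:Fin 7) - (0:Fin 7)) = 2 := rfl
lemma s21 : ((2:Fin 7) - (1:Fin 7)) = 1 := rfl
lemma s22 : ((2:Fin 7) - (2:Fin 7)) = 0 := rfl
lemma s23 : ((2:Fin 7) - (3:Fin 7)) = 6 := rfl
lemma s24 : ((2:Fin 7) - (4:Fin 7)) = 5 := rfl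
lemma s25 : ((2:Fin 7) - (5:Fin 7)) = 4 := rfl
lemma s26 : ((2:Fin 7) - (6:Fin 7)) = 3 := rfl
lemma s30 : ((3:Fin 7) - (0:Fin 7)) = 3 := rfl
lemma s31 : ((3:Fin 7) - (1:Fin 7)) = 2 := rfl
lemma s32 : ((3:Fin 7) - (2:Fin 7)) = 1 := rfl
lemma s33 : ((3:Fin 7) - (3:Fin 7)) = 0 := rfl
lemma s34 : ((3:Fin 7) - (4:Fin 7)) = 6 := rfl
lemma s35 : ((3:Fin 7) - (5:Fin 7)) = 5 := rfl
lemma s36 : ((3:Fin 7) - (6:Fin 7)) = 4 := rfl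
lemma s40 : ((4:Fin 7) - (0:Fin 7)) = 4 := rfl
lemma s41 : ((4:Fin 7) - (1:Fin 7)) = 3 := rfl
lemma s42 : ((4:Fin 7) - (2:Fin 7)) = 2 := rfl
lemma s43 : ((4:Fin 7) - (3:Fin 7)) = 1 := rfl
lemma s44 : ((4:Fin 7) - (4:Fin 7)) = 0 := rfl
lemma s45 : ((4:Fin 7) - (5:Fin 7)) = 6 := rfl
lemma s46 : ((4:Fin 7) - (6:Fin 7)) = 5 := rfl
lemma s50 : ((5:Fin 7) - (0:Fin 7)) = 5 := rfl
lemma s51 : ((5:Fin 7) - (1:Fin 7)) = 4 := rfl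
lemma s52 : ((5:Fin 7) - (2:Fin 7)) = 3 := rfl
lemma s53 : ((5:Fin 7) - (3:Fin 7)) = 2 := rfl
lemma s54 : ((5:Fin 7) - (4:Fin 7)) = 1 := rfl
lemma s55 : ((5:Fin 7) - (5:Fin 7)) = 0 := rfl
lemma s56 : ((5:Fin 7) - (6:Fin 7)) = 6 := rfl
lemma s60 : ((6:Fin 7) - (0:Fin 7)) = 6 := rfl
lemma s61 : ((6:Fin 7) - (1:Fin 7)) = 5 := rfl
lemma s62 : ((6:Fin 7) - (2:Fin 7)) = 4 := rfl
lemma s63 : ((6:Fin 7) - (3:Fin 7)) = 3 := rfl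
lemma s64 : ((6:Fin 7) - (4:Fin 7)) = 2 := rfl
lemma s65 : ((6:Fin 7) - (5:Fin 7)) = 1 := rfl
lemma s66 : ((6:Fin 7) - (6:Fin 7)) = 0 := rfl
lemma v7c0 (x0 x1 x2 x3 x4 x5 x6 : ℝ) : ![x0,x1,x2,x3,x4,x5,x6] (0:Fin 7) = x0 := rfl
lemma v7c1 (x0 x1 x2 x3 x4 x5 x6 : ℝ) : ![x0,x1,x2,x3,x4,x5,x6] (1:Fin 7) = x1 := rfl
lemma v7c2 (x0 x1 x2 x3 x4 x5 x6 : ℝ) : ![x0,x1,x2,x3,x4,x5,x6] (2:Fin 7) = x2 := rfl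
lemma v7c3 (x0 x1 x2 x3 x4 x5 x6 : ℝ) : ![x0,x1,x2,x3,x4,x5,x6] (3:Fin 7) = x3 := rfl
lemma v7c4 (x0 x1 x2 x3 x4 x5 x6 : ℝ) : ![x0,x1,x2,x3,x4,x5,x6] (4:Fin 7) = x4 := rfl
lemma v7c5 (x0 x1 x2 x3 x4 x5 x6 : ℝ) : ![x0,x1,x2,x3,x4,x5,x6] (5:Fin 7) = x5 := rfl
lemma v7c6 (x0 x1 x2 x3 x4 x5 x6 : ℝ) : ![x0,x1,x2,x3,x4,x5,x6] (6:Fin 7) = x6 := rfl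
lemma forall_fin7 (p : Fin 7 → Prop) : (∀ i, p i) ↔ p 0 ∧ p 1 ∧ p 2 ∧ p 3 ∧ p 4 ∧ p 5 ∧ p 6 := by
  constructor
  · intro h; exact ⟨h 0, h 1, h 2, h 3, h 4, h 5, h 6⟩
  · rintro ⟨a,b,c,d,e,f,g⟩ i; fin_cases i <;> assumption

lemma exists_fin7 (p : Fin 7 → Prop) : (∃ i, p i) ↔ p 0 ∨ p 1 ∨ p 2 ∨ p 3 ∨ p 4 ∨ p 5 ∨ p 6 := by
  constructor
  · rintro ⟨i, hi⟩; fin_cases i <;> tauto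
  · rintro (h|h|h|h|h|h|h) <;> exact ⟨_, h⟩

lemma keyRF (v : Fin 7 → ℝ) : RFano.transpose.mulVec v = ![(1/2)*(-(v 0) + v 6 + v 5 + v 3), (1/2)*(-(v 1) + v 0 + v 6 + v 4), (1/2)*(-(v 2) + v 1 + v 0 + v 5), (1/2)*(-(v 3) + v 2 + v 1 + v 6), (1/2)*(-(v 4) + v 3 + v 2 + v 0), (1/2)*(-(v 5) + v 4 + v 3 + v 1), (1/2)*(-(v 6) + v 5 + v 4 + v 2)] := by
  have hR : ∀ i j : Fin 7, RFano i j = 1/2 * ![(-1:ℝ),1,1,0,1,0,0] (j - i) := fun _ _ => rfl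
  rw [funext_iff, forall_fin7]
  refine ⟨?_,?_,?_,?_,?_,?_,?_⟩ <;>
    simp only [Matrix.mulVec, dotProduct, Fin.sum_univ_seven, Matrix.transpose_apply, hR,
      s00,s01,s02,s03,s04,s05,s06,s10,s11,s12,s13,s14,s15,s16,s20,s21,s22,s23,s24,s25,s26,s30,s31,s32,s33,s34,s35,s36,s40,s41,s42,s43,s44,s45,s46,s50,s51,s52,s53,s54,s55,s56,s60,s61,s62,s63,s64,s65,s66,
      v7c0,v7c1,v7c2,v7c3,v7c4,v7c5,v7c6] <;> ring


set_option maxHeartbeats 4000000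

/-- A `0/1` vector `v` satisfies that `R_Fanoᵀ v` is a `0/1` vector iff `v` is zero, all-ones,
or a cyclic shift of `(1,1,0,1,0,0,0)` or of `(0,0,1,0,1,1,1)`; and the images of the latter
are the corresponding shifts of `(0,0,1,0,1,1,0)` and `(1,1,0,1,0,0,1)` respectively. -/
theorem stmt_13 (v : Fin 7 → ℝ) (hv : ∀ j, v j = 0 ∨ v j = 1) :
    ((∀ j, RFano.transpose.mulVec v j = 0 ∨ RFano.transpose.mulVec v j = 1) ↔
      (v = (fun _ => 0) ∨ v = (fun _ => 1) ∨
        ∃ i : Fin 7, v = shift7 i ![1, 1, 0, 1, 0, 0, 0] ∨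
                     v = shift7 i ![0, 0, 1, 0, 1, 1, 1])) ∧
    (∀ i : Fin 7, v = shift7 i ![1, 1, 0, 1, 0, 0, 0] →
      RFano.transpose.mulVec v = shift7 i ![0, 0, 1, 0, 1, 1, 0]) ∧
    (∀ i : Fin 7, v = shift7 i ![0, 0, 1, 0, 1, 1, 1] →
      RFano.transpose.mulVec v = shift7 i ![1, 1, 0, 1, 0, 0, 1]) := by
  rcases hv 0 with h0|h0 <;> rcases hv 1 with h1|h1 <;> rcases hv 2 with h2|h2 <;>
    rcases hv 3 with h3|h3 <;> rcases hv 4 with h4|h4 <;> rcases hv 5 with h5|h5 <;>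
    rcases hv 6 with h6|h6 <;>
    simp only [keyRF, funext_iff, forall_fin7, exists_fin7, shift7, s00,s01,s02,s03,s04,s05,s06,s10,s11,s12,s13,s14,s15,s16,s20,s21,s22,s23,s24,s25,s26,s30,s31,s32,s33,s34,s35,s36,s40,s41,s42,s43,s44,s45,s46,s50,s51,s52,s53,s54,s55,s56,s60,s61,s62,s63,s64,s65,s66, v7c0,v7c1,v7c2,v7c3,v7c4,v7c5,v7c6, h0,h1,h2,h3,h4,h5,h6] <;>
    norm_num
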